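/- Let G be a group and let a_1, a_2, a_3, a_4, b_1, b_2, b_3, b_4, b be elements of G. Assume: (i) a_1 a_3 = a_3 a_1 and a_2 a_4 = a_4 a_2; (ii) for each i taken modulo 4, b a_i b_i = a_i b_i a_{i+1} = b_i a_{i+1} b = a_{i+1} b a_i; and (iii) the product z = a_1² b_1 a_2² b_2 a_3² b_3 a_4² b_4 is central in G. Then the 12-tuple (a_1, a_1, b_1, a_2, a_2, b_2, a_3, a_3, b_3, a_4, a_4, b_4) is Hurwitz equivalent to the 12-tuple (a_1, a_3, b, a_2, a_4, b, a_1, a_3, b, a_2, a_4, b). -/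

import Mathlib

/-!
Hurwitz moves preserve the product of a tuple, and a tuple whose product is central may be
rotated cyclically. Pulling an entry `w` leftwards across a block `l` turns it into
`l.prod * w * l.prod⁻¹`, so the relations (ii) let each block `(aᵢ, bᵢ, aᵢ₊₁)` be traded first
for `(b, aᵢ, bᵢ)` and then for `(aᵢ₊₁, b, aᵢ)`. After one rotation the left-hand tuple splits
into these four blocks; after the trade a second rotation and the two commutations (i) give the
right-hand tuple.
-/

/-- An elementary Hurwitz move on a tuple of elements of a group: replace an adjacent
pair `(a, b)` by `(a * b * a⁻¹, a)` or by `(b, b⁻¹ * a * b)`. -/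
inductive HurwitzMove {G : Type*} [Group G] : List G → List G → Prop
  | slideLeft (l₁ l₂ : List G) (a b : G) :
      HurwitzMove (l₁ ++ a :: b :: l₂) (l₁ ++ (a * b * a⁻¹) :: a :: l₂)
  | slideRight (l₁ l₂ : List G) (a b : G) :
      HurwitzMove (l₁ ++ a :: b :: l₂) (l₁ ++ b :: (b⁻¹ * a * b) :: l₂)

/-- Two tuples are Hurwitz equivalent if one is obtained from the other by a finite
sequence of elementary Hurwitz moves. -/
def HurwitzEquiv {G : Type*} [Group G] : List G → List G → Prop :=
  Relation.ReflTransGen HurwitzMove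

section

variable {G : Type*} [Group G]

namespace HurwitzMove

theorem prod_eq {l l' : List G} (h : HurwitzMove l l') : l.prod = l'.prod := by
  cases h <;> simp only [List.prod_append, List.prod_cons] <;> group

theorem append_left (c : List G) {l l' : List G} (h : HurwitzMove l l') :
    HurwitzMove (c ++ l) (c ++ l') := by
  cases h with
  | slideLeft l₁ l₂ a b => simpa only [List.append_assoc] using slideLeft (c ++ l₁) l₂ a b
  | slideRight l₁ l₂ a b => simpa only [List.append_assoc] using slideRight (c ++ l₁) l₂ a b

theorem append_right (c : List G) {l l' : List G} (h : HurwitzMove l l') :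
    HurwitzMove (l ++ c) (l' ++ c) := by
  cases h with
  | slideLeft l₁ l₂ a b =>
    simpa only [List.append_assoc, List.cons_append] using slideLeft l₁ (l₂ ++ c) a b
  | slideRight l₁ l₂ a b =>
    simpa only [List.append_assoc, List.cons_append] using slideRight l₁ (l₂ ++ c) a b

end HurwitzMove

namespace HurwitzEquiv

theorem refl (l : List G) : HurwitzEquiv l l := Relation.ReflTransGen.refl

theorem trans {l₁ l₂ l₃ : List G} (h₁₂ : HurwitzEquiv l₁ l₂) (h₂₃ : HurwitzEquiv l₂ l₃) :
    HurwitzEquiv l₁ l₃ :=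
  Relation.ReflTransGen.trans h₁₂ h₂₃

instance : Trans (HurwitzEquiv (G := G)) HurwitzEquiv HurwitzEquiv := ⟨trans⟩

theorem of_move {l l' : List G} (h : HurwitzMove l l') : HurwitzEquiv l l' :=
  Relation.ReflTransGen.single h

theorem prod_eq {l l' : List G} (h : HurwitzEquiv l l') : l.prod = l'.prod := by
  induction h with
  | refl => rfl
  | tail _ hm ih => exact ih.trans hm.prod_eq

theorem append_left (c : List G) {l l' : List G} (h : HurwitzEquiv l l') :
    HurwitzEquiv (c ++ l) (c ++ l') :=
  Relation.ReflTransGen.lift (c ++ ·) (fun _ _ => HurwitzMove.append_left c) _ _ h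

theorem append_right (c : List G) {l l' : List G} (h : HurwitzEquiv l l') :
    HurwitzEquiv (l ++ c) (l' ++ c) :=
  Relation.ReflTransGen.lift (· ++ c) (fun _ _ => HurwitzMove.append_right c) _ _ h

theorem append {l₁ l₁' l₂ l₂' : List G} (h₁ : HurwitzEquiv l₁ l₁') (h₂ : HurwitzEquiv l₂ l₂') :
    HurwitzEquiv (l₁ ++ l₂) (l₁' ++ l₂') :=
  (h₁.append_right l₂).trans (h₂.append_left l₁')

theorem cons_conj (x : G) (l : List G) :
    HurwitzEquiv (x :: l) (l ++ [l.prod⁻¹ * x * l.prod]) := by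
  induction l generalizing x with
  | nil => simpa using refl [x]
  | cons y t ih =>
    have hmove : HurwitzEquiv (x :: y :: t) (y :: (y⁻¹ * x * y) :: t) :=
      of_move (HurwitzMove.slideRight [] t x y)
    simpa only [List.prod_cons, List.cons_append, List.singleton_append, List.nil_append,
      mul_inv_rev, mul_assoc]
      using hmove.trans ((ih (y⁻¹ * x * y)).append_left [y])

theorem concat_conj (l : List G) (w : G) :
    HurwitzEquiv (l ++ [w]) ((l.prod * w * l.prod⁻¹) :: l) := by
  induction l with
  | nil => simpa using refl [w]
  | cons x t ih =>
    have hmove : HurwitzEquiv (x :: (t.prod * w * t.prod⁻¹) :: t)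
        ((x * (t.prod * w * t.prod⁻¹) * x⁻¹) :: x :: t) :=
      of_move (HurwitzMove.slideLeft [] t x _)
    simpa only [List.prod_cons, List.cons_append, List.singleton_append, List.nil_append,
      mul_inv_rev, mul_assoc]
      using (ih.append_left [x]).trans hmove

theorem concat_of_mul_eq {l : List G} {v w : G} (h : v * l.prod = l.prod * w) :
    HurwitzEquiv (l ++ [w]) (v :: l) := by
  have hv : l.prod * w * l.prod⁻¹ = v := by rw [← h]; group
  simpa only [hv] using concat_conj l w

theorem pair_swap {x y : G} (h : y * x = x * y) : HurwitzEquiv [x, y] [y, x] :=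
  concat_of_mul_eq (l := [x]) (by simpa using h)

theorem triple_pull {x y v w : G} (h : v * x * y = x * y * w) :
    HurwitzEquiv [x, y, w] [v, x, y] :=
  concat_of_mul_eq (l := [x, y]) (by simpa [mul_assoc] using h)

theorem cons_of_prod_mem_center {x : G} {l : List G} (h : (x :: l).prod ∈ Subgroup.center G) :
    HurwitzEquiv (x :: l) (l ++ [x]) := by
  set z := (x :: l).prod
  have hl : l.prod = x⁻¹ * z := by simp [z]
  have hconj : l.prod⁻¹ * x * l.prod = x := by
    rw [hl, show (x⁻¹ * z)⁻¹ * x * (x⁻¹ * z) = z⁻¹ * (x * z) by group,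
      Subgroup.mem_center_iff.mp h x, inv_mul_cancel_left]
  simpa only [hconj] using cons_conj x l

theorem append_comm_of_prod_mem_center {l₁ l₂ : List G}
    (h : (l₁ ++ l₂).prod ∈ Subgroup.center G) : HurwitzEquiv (l₁ ++ l₂) (l₂ ++ l₁) := by
  induction l₁ generalizing l₂ with
  | nil => simpa using refl l₂
  | cons x t ih =>
    have hrot : HurwitzEquiv (x :: (t ++ l₂)) (t ++ (l₂ ++ [x])) := by
      rw [← List.append_assoc]
      exact cons_of_prod_mem_center (l := t ++ l₂) h
    have hcenter : (t ++ (l₂ ++ [x])).prod ∈ Subgroup.center G := hrot.prod_eq ▸ h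
    simpa only [List.append_assoc, List.cons_append, List.singleton_append, List.nil_append]
      using hrot.trans (ih hcenter)

theorem triple_shift {a c a' b : G}
    (h : b * a * c = a * c * a' ∧ a * c * a' = c * a' * b ∧ c * a' * b = a' * b * a) :
    HurwitzEquiv [a, c, a'] [a', b, a] :=
  (triple_pull h.1).trans (triple_pull (h.1.trans (h.2.1.trans h.2.2)).symm)

end HurwitzEquiv

end

open HurwitzEquiv in
/-- The algebraic content of the identification of the 4-holed torus relation
`N₄ = ∂₄` with Korkmaz–Ozbagci's relation `(a₁ a₃ b a₂ a₄ b)² = ∂₄`. -/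
theorem hurwitzEquiv_fourHoled_relation {G : Type*} [Group G]
    (a₁ a₂ a₃ a₄ b₁ b₂ b₃ b₄ b : G)
    (hc13 : a₁ * a₃ = a₃ * a₁) (hc24 : a₂ * a₄ = a₄ * a₂)
    (h1 : b * a₁ * b₁ = a₁ * b₁ * a₂ ∧ a₁ * b₁ * a₂ = b₁ * a₂ * b ∧
      b₁ * a₂ * b = a₂ * b * a₁)
    (h2 : b * a₂ * b₂ = a₂ * b₂ * a₃ ∧ a₂ * b₂ * a₃ = b₂ * a₃ * b ∧
      b₂ * a₃ * b = a₃ * b * a₂)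
    (h3 : b * a₃ * b₃ = a₃ * b₃ * a₄ ∧ a₃ * b₃ * a₄ = b₃ * a₄ * b ∧
      b₃ * a₄ * b = a₄ * b * a₃)
    (h4 : b * a₄ * b₄ = a₄ * b₄ * a₁ ∧ a₄ * b₄ * a₁ = b₄ * a₁ * b ∧
      b₄ * a₁ * b = a₁ * b * a₄)
    (hz : a₁ ^ 2 * b₁ * a₂ ^ 2 * b₂ * a₃ ^ 2 * b₃ * a₄ ^ 2 * b₄ ∈
      Subgroup.center G) :
    HurwitzEquiv
      [a₁, a₁, b₁, a₂, a₂, b₂, a₃, a₃, b₃, a₄, a₄, b₄]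
      [a₁, a₃, b, a₂, a₄, b, a₁, a₃, b, a₂, a₄, b] := by
  have hcenter : ([a₁] ++ [a₁, b₁, a₂, a₂, b₂, a₃, a₃, b₃, a₄, a₄, b₄]).prod ∈
      Subgroup.center G := by
    simpa [pow_two, mul_assoc] using hz
  have hblocks : HurwitzEquiv [a₁, a₁, b₁, a₂, a₂, b₂, a₃, a₃, b₃, a₄, a₄, b₄]
      [a₂, b, a₁, a₃, b, a₂, a₄, b, a₃, a₁, b, a₄] :=
    calc HurwitzEquiv _ [a₁, b₁, a₂, a₂, b₂, a₃, a₃, b₃, a₄, a₄, b₄, a₁] :=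
          append_comm_of_prod_mem_center hcenter
      HurwitzEquiv _ _ :=
        (triple_shift h1).append <| (triple_shift h2).append <|
          (triple_shift h3).append (triple_shift h4)
  have hcenter' : ([a₂, b] ++ [a₁, a₃, b, a₂, a₄, b, a₃, a₁, b, a₄]).prod ∈
      Subgroup.center G := hblocks.prod_eq ▸ hcenter
  calc HurwitzEquiv _ _ := hblocks
    HurwitzEquiv _ [a₁, a₃, b, a₂, a₄, b, a₃, a₁, b, a₄, a₂, b] :=
      append_comm_of_prod_mem_center hcenter'
    HurwitzEquiv _ _ := append_left [a₁, a₃, b, a₂, a₄, b] <|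
      ((pair_swap hc13).append_right [b]).append ((pair_swap hc24).append_right [b])
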